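/- Let m ≥ 1 and let F = ℚ(x_1,…,x_{2m}) be the field of rational functions in 2m independent variables. Let A be the 2m×2m skew-symmetric matrix over F with entries a_{ij} = (x_i − x_j)/(x_i + x_j). Then Pf(A) = ∏_{1≤i<j≤2m} (x_i − x_j)/(x_i + x_j) (Schur's Pfaffian identity). -/

import Mathlib

/-!
Expanding the Pfaffian along its first row,
`Pf(A) = ∑_w (-1)^w a_{0,w+1} Pf(A with rows and columns 0 and w+1 deleted)`,
since the matchings pairing `0` with `w + 1` are the matchings of the remaining points.
By induction the minors are Schur products again; dividing out the common factor
`∏_{1 ≤ i < j} a_ij`, the claim becomes the identity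
`∑_j (t - y_j)/(t + y_j) ∏_{k ≠ j} (y_j + y_k)/(y_j - y_k) = ∏_j (t - y_j)/(t + y_j)`
for an odd number of `y`'s, with `t = x_1` and `y = (x_2, …, x_{2m})`. This is the partial
fraction expansion of the right side in `t` (Lagrange interpolation at the nodes `-y_j`), whose
constant term is fixed by `t = 0`, where the right side is `(-1)^odd = -1`.
-/

open scoped BigOperators

noncomputable section

/-- The Pfaffian of an `N×N` matrix (`0` if `N` is odd), defined as the signed sum over
perfect matchings of `{0,…,N−1}`: each matching `{{i_1,j_1},…}` is encoded by the unique
permutation `σ` with `σ(2l) < σ(2l+1)` for all `l` and `σ(0) < σ(2) < ⋯`, its sign is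
the sign of the permutation `σ` (which sends `(0,1,2,3,…)` to `(i_1,j_1,i_2,j_2,…)`),
and its weight is `∏_l A_{σ(2l), σ(2l+1)}`. -/
noncomputable def pfaff {N : ℕ} {R : Type*} [CommRing R] (A : Matrix (Fin N) (Fin N) R) : R :=
  if N % 2 = 1 then 0 else
    ∑ σ ∈ Finset.univ.filter (fun σ : Equiv.Perm (Fin N) =>
        (∀ p q : Fin N, (p : ℕ) % 2 = 0 → (q : ℕ) = (p : ℕ) + 1 → σ p < σ q) ∧
        (∀ p q : Fin N, (p : ℕ) % 2 = 0 → (q : ℕ) % 2 = 0 → p < q → σ p < σ q)),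
      ((Equiv.Perm.sign σ : ℤ) : R) *
        ∏ p : Fin N,
          (if h : (p : ℕ) % 2 = 0 ∧ (p : ℕ) + 1 < N then A (σ p) (σ ⟨(p : ℕ) + 1, h.2⟩)
           else 1)

/-- The field `ℚ(x_1, …, x_{2m})` of rational functions in `2m` variables. -/
abbrev RatFunField (m : ℕ) : Type :=
  FractionRing (MvPolynomial (Fin (2 * m)) ℚ)

/-- The variable `x_i` viewed inside `ℚ(x_1, …, x_{2m})`. -/
noncomputable def xvar {m : ℕ} (i : Fin (2 * m)) : RatFunField m :=
  algebraMap (MvPolynomial (Fin (2 * m)) ℚ) (RatFunField m) (MvPolynomial.X i)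

open Finset Equiv Equiv.Perm Function Polynomial Lagrange

theorem Equiv.Perm.exists_decomposeFin_symm_zero_eq {n : ℕ} {σ : Perm (Fin (n + 1))}
    (h : σ 0 = 0) : ∃ τ, decomposeFin.symm (0, τ) = σ := by
  have h0 := decomposeFin_symm_apply_zero (decomposeFin σ).1 (decomposeFin σ).2
  rw [Prod.mk.eta, symm_apply_apply, h] at h0
  exact ⟨(decomposeFin σ).2, decomposeFin.symm_apply_eq.mpr (Prod.ext h0 rfl)⟩

namespace Pfaffian

variable {α β : Type*} [LinearOrder α] [LinearOrder β] {n N : ℕ}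

/-- `f` lists the pairs `{f 0, f 1}, {f 2, f 3}, …` of a perfect matching in the normal form
used by `pfaff`. -/
def IsMatchingOrder (f : Fin N → α) : Prop :=
  (∀ p q : Fin N, (p : ℕ) % 2 = 0 → (q : ℕ) = (p : ℕ) + 1 → f p < f q) ∧
  (∀ p q : Fin N, (p : ℕ) % 2 = 0 → (q : ℕ) % 2 = 0 → p < q → f p < f q)

instance (f : Fin N → α) : Decidable (IsMatchingOrder f) := by
  unfold IsMatchingOrder; infer_instance

variable {R : Type*} [CommRing R]

def pairProd (A : Matrix (Fin N) (Fin N) R) : R :=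
  ∏ p : Fin N,
    if h : (p : ℕ) % 2 = 0 ∧ (p : ℕ) + 1 < N then A p ⟨(p : ℕ) + 1, h.2⟩ else 1

theorem pfaff_eq_sum (hN : N % 2 = 0) (A : Matrix (Fin N) (Fin N) R) :
    pfaff A = ∑ σ ∈ univ.filter (fun σ : Perm (Fin N) => IsMatchingOrder σ),
      (sign σ : R) * pairProd (A.submatrix σ σ) := by
  rw [pfaff, if_neg (by omega)]
  rfl

theorem pairProd_succ_succ (A : Matrix (Fin (n + 2)) (Fin (n + 2)) R) :
    pairProd A =
      A 0 1 * pairProd (A.submatrix (fun i => i.succ.succ) (fun i => i.succ.succ)) := by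
  rw [pairProd, Fin.prod_univ_succ, Fin.prod_univ_succ, dif_pos (by simp), dif_neg (by simp),
    one_mul, pairProd]
  congr 1
  refine prod_congr rfl fun p _ => ?_
  by_cases hp : (p : ℕ) % 2 = 0 ∧ (p : ℕ) + 1 < n
  · rw [dif_pos (by simp; omega), dif_pos hp]
    rfl
  · rw [dif_neg (by simp; omega), dif_neg hp]

theorem isMatchingOrder_succ_succ_iff {f : Fin (n + 2) → α} :
    IsMatchingOrder f ↔
      f 0 < f 1 ∧ (∀ q : Fin n, (q : ℕ) % 2 = 0 → f 0 < f q.succ.succ) ∧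
        IsMatchingOrder (fun q => f q.succ.succ) := by
  constructor
  · intro h
    refine ⟨h.1 0 1 rfl rfl, fun q hq => h.2 0 q.succ.succ rfl (by simp; omega) (by simp),
      fun p q hp hq => h.1 _ _ (by simp; omega) (by simp [hq]),
      fun p q hp hq hpq => h.2 _ _ (by simp; omega) (by simp; omega) (by simpa using hpq)⟩
  · rintro ⟨h01, h0, h1, h2⟩
    refine ⟨fun p q hp hq => ?_, fun p q hp hq hpq => ?_⟩
    · obtain rfl | ⟨p, rfl⟩ := p.eq_zero_or_eq_succ
      · obtain rfl : q = 1 := Fin.ext (by simpa using hq)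
        exact h01
      obtain rfl | ⟨p, rfl⟩ := p.eq_zero_or_eq_succ
      · simp at hp
      obtain rfl | ⟨q, rfl⟩ := q.eq_zero_or_eq_succ
      · simp at hq
      obtain rfl | ⟨q, rfl⟩ := q.eq_zero_or_eq_succ
      · simp at hq
      exact h1 p q (by simp at hp; omega) (by simp at hq; omega)
    · obtain rfl | ⟨q, rfl⟩ := q.eq_zero_or_eq_succ
      · exact absurd hpq (Fin.not_lt_zero p)
      obtain rfl | ⟨q, rfl⟩ := q.eq_zero_or_eq_succ
      · simp at hq
      obtain rfl | ⟨p, rfl⟩ := p.eq_zero_or_eq_succ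
      · exact h0 q (by simp at hq; omega)
      obtain rfl | ⟨p, rfl⟩ := p.eq_zero_or_eq_succ
      · simp at hp
      exact h2 p q (by simp at hp; omega) (by simp at hq; omega) (by simpa using hpq)

theorem _root_.StrictMono.isMatchingOrder_comp_iff {g : α → β} (hg : StrictMono g)
    {f : Fin N → α} : IsMatchingOrder (g ∘ f) ↔ IsMatchingOrder f := by
  simp only [IsMatchingOrder, comp_apply, hg.lt_iff_lt]

theorem IsMatchingOrder.apply_zero_lt {f : Fin (n + 2) → α} (h : IsMatchingOrder f)
    {x : Fin (n + 2)} (hx : x ≠ 0) : f 0 < f x := by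
  obtain ⟨h01, h0, h1, -⟩ := isMatchingOrder_succ_succ_iff.mp h
  obtain rfl | ⟨x, rfl⟩ := x.eq_zero_or_eq_succ
  · exact absurd rfl hx
  obtain rfl | ⟨q, rfl⟩ := x.eq_zero_or_eq_succ
  · exact h01
  by_cases hq : (q : ℕ) % 2 = 0
  · exact h0 q hq
  -- an odd position `q` is preceded by its partner `q - 1`, which sits at an even position
  let r : Fin n := ⟨q - 1, by omega⟩
  exact (h0 r (by simp [r]; omega)).trans (h1 r q (by simp [r]; omega) (by simp [r]; omega))

/-- The matching permutation pairing `0` with `w + 1` and ordering the remaining pairs by `τ`. -/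
def matchPerm (w : Fin (n + 1)) (τ : Perm (Fin n)) : Perm (Fin (n + 2)) :=
  decomposeFin.symm (0, (Fin.cycleRange w).symm * decomposeFin.symm (0, τ))

variable (w : Fin (n + 1)) (τ : Perm (Fin n))

@[simp] theorem matchPerm_zero : matchPerm w τ 0 = 0 :=
  decomposeFin_symm_apply_zero _ _

@[simp] theorem matchPerm_one : matchPerm w τ 1 = w.succ := by
  simp [matchPerm, Fin.cycleRange_symm_zero]

@[simp] theorem matchPerm_succ_succ (q : Fin n) :
    matchPerm w τ q.succ.succ = (w.succAbove (τ q)).succ := by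
  simp [matchPerm, Fin.cycleRange_symm_succ]

theorem sign_matchPerm : sign (matchPerm w τ) = (-1) ^ (w : ℕ) * sign τ := by
  simp [matchPerm, Fin.sign_cycleRange]

theorem isMatchingOrder_matchPerm_iff :
    IsMatchingOrder (matchPerm w τ) ↔ IsMatchingOrder τ := by
  have hmono : StrictMono (Fin.succ ∘ w.succAbove) :=
    Fin.strictMono_succ.comp (Fin.strictMono_succAbove w)
  rw [isMatchingOrder_succ_succ_iff, ← hmono.isMatchingOrder_comp_iff]
  simp [Fin.succ_pos, comp_def]

variable {w τ}

theorem matchPerm_injective :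
    Injective (fun x : Fin (n + 1) × Perm (Fin n) => matchPerm x.1 x.2) := by
  rintro ⟨w, τ⟩ ⟨w', τ'⟩ h
  have hw : w = w' := Fin.succ_injective _ (by simpa using congr($h 1))
  subst hw
  refine Prod.ext rfl (Equiv.ext fun q => ?_)
  simpa using congr($h q.succ.succ)

theorem exists_matchPerm_eq {σ : Perm (Fin (n + 2))} (h : IsMatchingOrder σ) :
    ∃ w τ, matchPerm w τ = σ := by
  have hσ0 : σ 0 = 0 := by
    by_contra hne
    have := h.apply_zero_lt (x := σ.symm 0) fun h0 => hne (σ.symm_apply_eq.mp h0).symm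
    simp at this
  obtain ⟨e, rfl⟩ := exists_decomposeFin_symm_zero_eq hσ0
  obtain ⟨τ, hτ⟩ := exists_decomposeFin_symm_zero_eq (σ := Fin.cycleRange (e 0) * e)
    (by simp [Fin.cycleRange_self])
  refine ⟨e 0, τ, ?_⟩
  rw [matchPerm, hτ, ← mul_assoc, ← Perm.inv_def, inv_mul_cancel, one_mul]

theorem submatrix_matchPerm_succ_succ {S : Type*}
    (A : Matrix (Fin (n + 2)) (Fin (n + 2)) S) :
    (A.submatrix (matchPerm w τ) (matchPerm w τ)).submatrix (fun i => i.succ.succ)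
        (fun i => i.succ.succ) =
      ((A.submatrix Fin.succ Fin.succ).submatrix w.succAbove w.succAbove).submatrix τ τ := by
  ext i j
  simp

theorem pfaff_succ_succ (A : Matrix (Fin (n + 2)) (Fin (n + 2)) R) :
    pfaff A = ∑ w : Fin (n + 1), (-1) ^ (w : ℕ) * A 0 w.succ *
      pfaff ((A.submatrix Fin.succ Fin.succ).submatrix w.succAbove w.succAbove) := by
  by_cases hn : n % 2 = 1
  · simp [pfaff, hn, show (n + 2) % 2 = 1 by omega]
  simp only [pfaff_eq_sum (by omega : (n + 2) % 2 = 0), pfaff_eq_sum (by omega : n % 2 = 0),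
    mul_sum, ← sum_product']
  symm
  refine sum_nbij (fun x => matchPerm x.1 x.2) ?_ matchPerm_injective.injOn ?_ ?_
  · rintro ⟨w, τ⟩ hτ
    simpa [isMatchingOrder_matchPerm_iff] using hτ
  · intro σ hσ
    obtain ⟨w, τ, rfl⟩ := exists_matchPerm_eq (mem_filter.mp hσ).2
    exact ⟨(w, τ), by simpa [isMatchingOrder_matchPerm_iff] using hσ, rfl⟩
  · rintro ⟨w, τ⟩ -
    rw [pairProd_succ_succ, submatrix_matchPerm_succ_succ, sign_matchPerm]
    simp only [Matrix.submatrix_apply, matchPerm_zero, matchPerm_one]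
    push_cast
    ring

end Pfaffian

section Pairs

variable {M : Type*} [CommMonoid M]

theorem Fin.prod_prod_Ioi_succAbove {k : ℕ} (g : Fin (k + 1) → Fin (k + 1) → M)
    (w : Fin (k + 1)) :
    ∏ i, ∏ j ∈ Ioi i, g i j =
      (∏ j ∈ Ioi w, g w j) * (∏ i ∈ Iio w, g i w) *
        ∏ i, ∏ j ∈ Ioi i, g (w.succAbove i) (w.succAbove j) := by
  have hrow : ∀ i : Fin k, ∏ j ∈ Ioi (w.succAbove i), g (w.succAbove i) j =
      (if w.succAbove i < w then g (w.succAbove i) w else 1) *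
        ∏ j ∈ Ioi i, g (w.succAbove i) (w.succAbove j) := by
    intro i
    rw [← filter_lt_eq_Ioi, ← filter_lt_eq_Ioi, prod_filter, prod_filter,
      Fin.prod_univ_succAbove _ w]
    simp only [Fin.succAbove_lt_succAbove_iff]
  have hcol : ∏ i ∈ Iio w, g i w =
      ∏ i : Fin k, if w.succAbove i < w then g (w.succAbove i) w else 1 := by
    rw [← filter_gt_eq_Iio, prod_filter, Fin.prod_univ_succAbove _ w, if_neg (lt_irrefl w),
      one_mul]
  rw [Fin.prod_univ_succAbove _ w, hcol, mul_assoc, ← prod_mul_distrib]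
  simp only [hrow]

theorem Fin.prod_prod_Ioi_antisymm_succAbove {M : Type*} [CommRing M] {k : ℕ}
    (g : Fin (k + 1) → Fin (k + 1) → M) (hg : ∀ i j, g j i = -g i j) (w : Fin (k + 1)) :
    ∏ i, ∏ j ∈ Ioi i, g i j =
      (-1) ^ (w : ℕ) * (∏ j ∈ univ.erase w, g w j) *
        ∏ i, ∏ j ∈ Ioi i, g (w.succAbove i) (w.succAbove j) := by
  have hIio : ∏ i ∈ Iio w, g i w = (-1) ^ (w : ℕ) * ∏ i ∈ Iio w, g w i := by
    rw [← Fin.card_Iio w, ← prod_neg]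
    exact prod_congr rfl fun i _ => hg w i
  rw [Fin.prod_prod_Ioi_succAbove g w, hIio, ← compl_singleton, ← Ioi_disjUnion_Iio,
    prod_disjUnion]
  ring

end Pairs

section PartialFractions

variable {F : Type*} [Field F]

theorem nodalWeight_neg_mul_prod_neg_sub {n : ℕ} (y : Fin n → F) (i : Fin n) :
    nodalWeight univ (fun j => -y j) i * ∏ j, (-y i - y j) =
      -(2 * y i) * ∏ j ∈ univ.erase i, (y i + y j) / (y i - y j) := by
  rw [nodalWeight, ← mul_prod_erase univ _ (mem_univ i), mul_left_comm, ← prod_mul_distrib]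
  congr 1
  · ring
  · refine prod_congr rfl fun j _ => ?_
    rw [show -y i - -y j = -(y i - y j) by ring, inv_neg, div_eq_mul_inv]
    ring

theorem prod_sub_div_add_eq_one_sub_sum {n : ℕ} {y : Fin n → F} (hy : Injective y) {t : F}
    (ht : ∀ i, t + y i ≠ 0) :
    ∏ i, (t - y i) / (t + y i) =
      1 - ∑ i, 2 * y i / (t + y i) * ∏ j ∈ univ.erase i, (y i + y j) / (y i - y j) := by
  set D := nodal univ y - nodal univ (fun i => -y i)
  have hdeg : D.degree < #(univ : Finset (Fin n)) := by
    rw [← degree_nodal (v := y)]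
    exact degree_sub_lt_left (by rw [degree_nodal, degree_nodal]) nodal_ne_zero
      (by rw [nodal_monic.leadingCoeff, nodal_monic.leadingCoeff])
  have hnode : ∀ i, D.eval (-y i) = ∏ j, (-y i - y j) := fun i => by
    rw [eval_sub, eval_nodal, eval_nodal_at_node (v := fun j => -y j) (mem_univ i), sub_zero]
  have heval := congrArg (Polynomial.eval t)
    (eq_interpolate (fun i _ j _ h => hy (neg_injective h)) hdeg)
  rw [eval_interpolate_not_at_node _ (fun i _ h => ht i (by rw [h]; ring))] at heval
  simp only [hnode, D, eval_sub, eval_nodal, sub_neg_eq_add] at heval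
  have hden : ∏ i, (t + y i) ≠ 0 := prod_ne_zero_iff.mpr fun i _ => ht i
  rw [prod_div_distrib, div_eq_iff hden, sub_mul, one_mul, sum_mul]
  rw [sub_eq_iff_eq_add] at heval
  rw [heval, mul_sum, add_comm, sub_eq_add_neg, ← sum_neg_distrib]
  refine congrArg _ (sum_congr rfl fun i _ => ?_)
  rw [mul_right_comm (nodalWeight _ _ _), nodalWeight_neg_mul_prod_neg_sub]
  ring

theorem sum_sub_div_add_mul_prod_erase [NeZero (2 : F)] {n : ℕ} (hn : Odd n) {y : Fin n → F}
    (hy : Injective y) (hy0 : ∀ i, y i ≠ 0) {t : F} (ht : ∀ i, t + y i ≠ 0) :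
    ∑ i, (t - y i) / (t + y i) * ∏ j ∈ univ.erase i, (y i + y j) / (y i - y j) =
      ∏ i, (t - y i) / (t + y i) := by
  -- the case `t = 0` of the partial fraction expansion, where the left side is `(-1) ^ n = -1`
  have hsum : ∑ i, ∏ j ∈ univ.erase i, (y i + y j) / (y i - y j) = 1 := by
    have h0 := prod_sub_div_add_eq_one_sub_sum hy (t := 0) (by simpa using hy0)
    simp only [zero_sub, zero_add, neg_div, div_self (hy0 _), mul_div_assoc, mul_one,
      prod_const, card_univ, Fintype.card_fin, hn.neg_one_pow, ← mul_sum] at h0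
    have h2 : (2 : F) * (∑ i, ∏ j ∈ univ.erase i, (y i + y j) / (y i - y j) - 1) = 0 := by
      linear_combination h0
    exact sub_eq_zero.mp ((mul_eq_zero.mp h2).resolve_left two_ne_zero)
  have hsplit : ∀ i, (t - y i) / (t + y i) = 1 - 2 * y i / (t + y i) := fun i => by
    field_simp [ht i]; ring
  rw [prod_sub_div_add_eq_one_sub_sum hy ht, ← hsum]
  simp only [hsplit, sub_mul, one_mul, sum_sub_distrib]

end PartialFractions

section Schur

open Pfaffian

variable {F : Type*} [Field F]

def schurMatrix {n : ℕ} (y : Fin n → F) : Matrix (Fin n) (Fin n) F :=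
  Matrix.of fun i j => (y i - y j) / (y i + y j)

@[simp] theorem schurMatrix_apply {n : ℕ} (y : Fin n → F) (i j : Fin n) :
    schurMatrix y i j = (y i - y j) / (y i + y j) :=
  rfl

theorem schurMatrix_submatrix {m n : ℕ} (y : Fin n → F) (f : Fin m → Fin n) :
    (schurMatrix y).submatrix f f = schurMatrix (y ∘ f) :=
  rfl

def schurProd {n : ℕ} (y : Fin n → F) : F :=
  ∏ i, ∏ j ∈ Ioi i, (y i - y j) / (y i + y j)

theorem schurProd_cons {n : ℕ} (t : F) (z : Fin n → F) :
    schurProd (Fin.cons t z : Fin (n + 1) → F) =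
      (∏ j, (t - z j) / (t + z j)) * schurProd z := by
  rw [schurProd, Fin.prod_univ_succ, Fin.prod_Ioi_zero]
  simp [Fin.prod_Ioi_succ, schurProd]

theorem neg_one_pow_mul_schurProd_comp_succAbove {n : ℕ} {y : Fin (n + 1) → F}
    (hy : Injective y) (hadd : ∀ i j, y i + y j ≠ 0) (w : Fin (n + 1)) :
    (-1) ^ (w : ℕ) * schurProd (y ∘ w.succAbove) =
      (∏ j ∈ univ.erase w, (y w + y j) / (y w - y j)) * schurProd y := by
  have hD : ∏ j ∈ univ.erase w, (y w - y j) / (y w + y j) ≠ 0 :=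
    prod_ne_zero_iff.mpr fun j hj => div_ne_zero
      (sub_ne_zero.mpr (hy.ne (ne_of_mem_erase hj).symm)) (hadd w j)
  simp only [schurProd, comp_apply]
  rw [Fin.prod_prod_Ioi_antisymm_succAbove (fun i j => (y i - y j) / (y i + y j))
    (fun i j => by rw [← neg_div, neg_sub, add_comm]) w]
  simp only [← inv_div (y w - _), prod_inv_distrib]
  field_simp

theorem pfaff_schurMatrix {n : ℕ} (hn : Even n) {y : Fin n → F} (hy : Injective y)
    (hadd : ∀ i j, y i + y j ≠ 0) : pfaff (schurMatrix y) = schurProd y := by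
  induction n using Nat.twoStepInduction with
  | zero => simp [pfaff_eq_sum, pairProd, IsMatchingOrder, schurProd]
  | one => exact absurd hn Nat.not_even_one
  | more k ih _ =>
    obtain ⟨t, z, rfl⟩ : ∃ t z, Fin.cons t z = y :=
      ⟨y 0, Fin.tail y, Fin.cons_self_tail y⟩
    have hk : Even k := (Nat.even_add.mp hn).mpr even_two
    have hz : Injective z := (Fin.cons_injective_iff.mp hy).2
    have hzz (i j : Fin (k + 1)) : z i + z j ≠ 0 := by simpa using hadd i.succ j.succ
    have htz (i : Fin (k + 1)) : t + z i ≠ 0 := by simpa using hadd 0 i.succ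
    have : NeZero (2 : F) := ⟨fun h => hzz 0 0 (by rw [← two_mul, h, zero_mul])⟩
    have hterm (w : Fin (k + 1)) :
        (-1) ^ (w : ℕ) * schurMatrix (Fin.cons t z) 0 w.succ *
          pfaff (schurMatrix (z ∘ w.succAbove)) =
        (t - z w) / (t + z w) * (∏ j ∈ univ.erase w, (z w + z j) / (z w - z j)) *
          schurProd z := by
      rw [ih hk (hz.comp Fin.succAbove_right_injective) (fun i j => hzz _ _), mul_right_comm,
        neg_one_pow_mul_schurProd_comp_succAbove hz hzz w]
      simp only [schurMatrix_apply, Fin.cons_zero, Fin.cons_succ]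
      ring
    rw [pfaff_succ_succ]
    simp only [schurMatrix_submatrix, Fin.cons_comp_succ, hterm]
    rw [← sum_mul, sum_sub_div_add_mul_prod_erase hk.add_one hz
      (fun i h => hzz i i (by rw [h, add_zero])) htz, schurProd_cons]

end Schur

theorem xvar_injective {m : ℕ} : Injective (xvar (m := m)) :=
  (IsFractionRing.injective _ _).comp MvPolynomial.X_injective

theorem xvar_add_xvar_ne_zero {m : ℕ} (i j : Fin (2 * m)) : xvar i + xvar j ≠ 0 := by
  rw [xvar, xvar, ← map_add, Ne, map_eq_zero_iff _ (IsFractionRing.injective _ _)]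
  intro h
  simpa using congrArg (MvPolynomial.eval fun _ => (1 : ℚ)) h

theorem schur_pfaffian_identity_general (m : ℕ) :
    pfaff (Matrix.of fun i j : Fin (2 * m) =>
        (xvar i - xvar j) / (xvar i + xvar j)) =
      ∏ i : Fin (2 * m), ∏ j ∈ Finset.Ioi i,
        (xvar i - xvar j) / (xvar i + xvar j) :=
  pfaff_schurMatrix (even_two_mul m) xvar_injective xvar_add_xvar_ne_zero

/-- **Schur's Pfaffian identity.**  Let `m ≥ 1` and `F = ℚ(x_1,…,x_{2m})`.
Let `A` be the `2m × 2m` skew-symmetric matrix with entries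
`a_{ij} = (x_i − x_j)/(x_i + x_j)`.  Then
`Pf(A) = ∏_{1 ≤ i < j ≤ 2m} (x_i − x_j)/(x_i + x_j)`. -/
theorem schur_pfaffian_identity (m : ℕ) (hm : 1 ≤ m) :
    pfaff (Matrix.of fun i j : Fin (2 * m) =>
        (xvar i - xvar j) / (xvar i + xvar j)) =
      ∏ i : Fin (2 * m), ∏ j ∈ Finset.Ioi i,
        (xvar i - xvar j) / (xvar i + xvar j) :=
  schur_pfaffian_identity_general m

end
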